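/- Let φ : ℝ → ℝ be three times continuously differentiable on [a,b] with a < b, and let m₃ ≤ φ'''(t) ≤ M₃ on [a,b]. Then |(φ(a)+φ(b))/6 + (2/3)φ((a+b)/2) - (1/(b-a))∫_a^b φ(t) dt| ≤ (1/1152)(M₃ - m₃)(b-a)³. -/

import Mathlib

/-!
Peano-kernel proof. Three integrations by parts against `K_c(t) = (t - c)² (t - (a+b)/2) / 6`,
with `c = a` on the left half and `c = b` on the right half, express the Simpson error
`(b-a)/6 (φ a + φ b) + 2(b-a)/3 φ((a+b)/2) - ∫ φ` as
`∫_a^{(a+b)/2} K_a φ''' + ∫_{(a+b)/2}^b K_b φ'''`; the `φ'((a+b)/2)` boundary terms of the two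
halves cancel. The kernel is `≤ 0` on the left half and `≥ 0` on the right half, with integrals
`∓(b-a)⁴/1152`, so bounding `φ'''` between `m₃` and `M₃` traps the error in an interval of
half-width `(M₃ - m₃)(b-a)⁴/1152`.
-/

open Set intervalIntegral MeasureTheory

theorem integral_eq_sub_of_hasDerivWithinAt_uIcc {f f' : ℝ → ℝ} {a b : ℝ}
    (hf : ∀ x ∈ uIcc a b, HasDerivWithinAt f (f' x) (uIcc a b) x)
    (hint : IntervalIntegrable f' volume a b) : ∫ x in a..b, f' x = f b - f a :=
  integral_eq_sub_of_hasDeriv_right (fun x hx => (hf x hx).continuousWithinAt)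
    (fun x hx => ((hf x (Ioo_subset_Icc_self hx)).hasDerivAt
      (Icc_mem_nhds hx.1 hx.2)).hasDerivWithinAt) hint

theorem integral_mul_mem_Icc_of_nonneg {K g : ℝ → ℝ} {l r lo hi : ℝ} (hlr : l ≤ r)
    (hK : ∀ t ∈ Icc l r, 0 ≤ K t) (hg : ∀ t ∈ Icc l r, g t ∈ Icc lo hi)
    (hKc : ContinuousOn K (Icc l r)) (hgc : ContinuousOn g (Icc l r)) :
    ∫ t in l..r, K t * g t ∈ Icc (lo * ∫ t in l..r, K t) (hi * ∫ t in l..r, K t) := by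
  have hKi := hKc.intervalIntegrable_of_Icc (μ := volume) hlr
  have hKgi := (hKc.mul hgc).intervalIntegrable_of_Icc (μ := volume) hlr
  rw [← intervalIntegral.integral_const_mul, ← intervalIntegral.integral_const_mul]
  constructor
  · refine integral_mono_on hlr (hKi.const_mul lo) hKgi fun t ht => ?_
    nlinarith [hK t ht, (hg t ht).1]
  · refine integral_mono_on hlr hKgi (hKi.const_mul hi) fun t ht => ?_
    nlinarith [hK t ht, (hg t ht).2]

theorem integral_mul_third_deriv_add {φ φ' φ'' φ''' K K' K'' : ℝ → ℝ} {c m : ℝ}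
    (hφ' : ∀ x ∈ uIcc c m, HasDerivWithinAt φ (φ' x) (uIcc c m) x)
    (hφ'' : ∀ x ∈ uIcc c m, HasDerivWithinAt φ' (φ'' x) (uIcc c m) x)
    (hφ''' : ∀ x ∈ uIcc c m, HasDerivWithinAt φ'' (φ''' x) (uIcc c m) x)
    (hcont : ContinuousOn φ''' (uIcc c m))
    (hK : ∀ t, HasDerivAt K (K' t) t) (hK' : ∀ t, HasDerivAt K' (K'' t) t)
    (hK'' : ∀ t, HasDerivAt K'' 1 t) :
    ∫ t in c..m, (K t * φ''' t + φ t) =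
      (K m * φ'' m - K' m * φ' m + K'' m * φ m) -
        (K c * φ'' c - K' c * φ' c + K'' c * φ c) := by
  refine integral_eq_sub_of_hasDerivWithinAt_uIcc
    (f := fun t => K t * φ'' t - K' t * φ' t + K'' t * φ t) (fun x hx => ?_) ?_
  · exact ((((hK x).hasDerivWithinAt.mul (hφ''' x hx)).sub
      ((hK' x).hasDerivWithinAt.mul (hφ'' x hx))).add
      ((hK'' x).hasDerivWithinAt.mul (hφ' x hx))).congr_deriv (by ring)
  · have hφc : ContinuousOn φ (uIcc c m) := fun x hx => (hφ' x hx).continuousWithinAt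
    have hKc : Continuous K := continuous_iff_continuousAt.2 fun t => (hK t).continuousAt
    exact ((hKc.continuousOn.mul hcont).add hφc).intervalIntegrable

/-- Peano kernel of Simpson's rule on the half of the interval between the endpoint `c` and the
midpoint `m`. -/
noncomputable def simpsonKernel (c m t : ℝ) : ℝ := (t - c) ^ 2 * (t - m) / 6

section SimpsonKernel

variable (c m : ℝ)

theorem continuous_simpsonKernel : Continuous (simpsonKernel c m) := by
  unfold simpsonKernel; fun_prop

theorem hasDerivAt_simpsonKernel (t : ℝ) :
    HasDerivAt (simpsonKernel c m) ((t - c) * (3 * t - c - 2 * m) / 6) t :=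
  ((((hasDerivAt_id' t).sub_const c).fun_pow 2).mul
    ((hasDerivAt_id' t).sub_const m)).div_const 6 |>.congr_deriv (by ring)

theorem hasDerivAt_simpsonKernel_deriv (t : ℝ) :
    HasDerivAt (fun t => (t - c) * (3 * t - c - 2 * m) / 6) (t - (2 * c + m) / 3) t :=
  (((hasDerivAt_id' t).sub_const c).mul
    ((((hasDerivAt_id' t).const_mul 3).sub_const c).sub_const (2 * m))).div_const 6
    |>.congr_deriv (by ring)

theorem hasDerivAt_simpsonKernel_deriv_deriv (t : ℝ) :
    HasDerivAt (fun t => t - (2 * c + m) / 3) 1 t :=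
  (hasDerivAt_id t).sub_const _

theorem integral_simpsonKernel : ∫ t in c..m, simpsonKernel c m t = -(m - c) ^ 4 / 72 := by
  have h : ∀ t, HasDerivAt (fun t => (t - c) ^ 3 * (3 * (t - c) - 4 * (m - c)) / 72)
      (simpsonKernel c m t) t := by
    intro t
    exact ((((hasDerivAt_id' t).sub_const c).fun_pow 3).mul
      ((((hasDerivAt_id' t).sub_const c).const_mul 3).sub_const (4 * (m - c)))).div_const 72
      |>.congr_deriv (by simp only [simpsonKernel]; ring)
  rw [integral_eq_sub_of_hasDerivAt (fun t _ => h t)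
    ((continuous_simpsonKernel c m).intervalIntegrable _ _)]
  ring

theorem simpsonKernel_nonpos {t : ℝ} (ht : t ∈ Icc c m) : simpsonKernel c m t ≤ 0 :=
  div_nonpos_of_nonpos_of_nonneg (mul_nonpos_of_nonneg_of_nonpos (sq_nonneg _)
    (sub_nonpos.2 ht.2)) (by norm_num)

theorem simpsonKernel_nonneg {t : ℝ} (ht : t ∈ Icc m c) : 0 ≤ simpsonKernel c m t :=
  div_nonneg (mul_nonneg (sq_nonneg _) (sub_nonneg.2 ht.1)) (by norm_num)

theorem integral_simpsonKernel_mul {φ φ' φ'' φ''' : ℝ → ℝ}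
    (hφ' : ∀ x ∈ uIcc c m, HasDerivWithinAt φ (φ' x) (uIcc c m) x)
    (hφ'' : ∀ x ∈ uIcc c m, HasDerivWithinAt φ' (φ'' x) (uIcc c m) x)
    (hφ''' : ∀ x ∈ uIcc c m, HasDerivWithinAt φ'' (φ''' x) (uIcc c m) x)
    (hcont : ContinuousOn φ''' (uIcc c m)) :
    ∫ t in c..m, simpsonKernel c m t * φ''' t =
      (m - c) / 3 * (φ c + 2 * φ m) - (m - c) ^ 2 / 6 * φ' m - ∫ t in c..m, φ t := by
  have h := integral_mul_third_deriv_add hφ' hφ'' hφ''' hcont (hasDerivAt_simpsonKernel c m)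
    (hasDerivAt_simpsonKernel_deriv c m) (hasDerivAt_simpsonKernel_deriv_deriv c m)
  have hφc : ContinuousOn φ (uIcc c m) := fun x hx => (hφ' x hx).continuousWithinAt
  have hKφ : IntervalIntegrable (fun t => simpsonKernel c m t * φ''' t) volume c m :=
    ((continuous_simpsonKernel c m).continuousOn.mul hcont).intervalIntegrable
  rw [integral_add hKφ hφc.intervalIntegrable] at h
  rw [eq_sub_iff_add_eq, h]
  simp only [simpsonKernel]
  ring

end SimpsonKernel

section SimpsonError

variable {a b : ℝ} {φ φ' φ'' φ''' : ℝ → ℝ}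

theorem simpson_error_eq_integral_simpsonKernel
    (hφ' : ∀ x ∈ Icc a b, HasDerivWithinAt φ (φ' x) (Icc a b) x)
    (hφ'' : ∀ x ∈ Icc a b, HasDerivWithinAt φ' (φ'' x) (Icc a b) x)
    (hφ''' : ∀ x ∈ Icc a b, HasDerivWithinAt φ'' (φ''' x) (Icc a b) x)
    (hcont : ContinuousOn φ''' (Icc a b)) (hab : a ≤ b) :
    (b - a) / 6 * (φ a + φ b) + 2 * (b - a) / 3 * φ ((a + b) / 2) - ∫ t in a..b, φ t =
      (∫ t in a..(a + b) / 2, simpsonKernel a ((a + b) / 2) t * φ''' t) +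
        ∫ t in (a + b) / 2..b, simpsonKernel b ((a + b) / 2) t * φ''' t := by
  have restrict : ∀ {f f' : ℝ → ℝ}, (∀ x ∈ Icc a b, HasDerivWithinAt f (f' x) (Icc a b) x) →
      ∀ {s}, s ⊆ Icc a b → ∀ x ∈ s, HasDerivWithinAt f (f' x) s x :=
    fun hf _ hs x hx => (hf x (hs hx)).mono hs
  have hmid : (a + b) / 2 ∈ Icc a b := ⟨by linarith, by linarith⟩
  have hL : uIcc a ((a + b) / 2) ⊆ Icc a b := uIcc_subset_Icc (left_mem_Icc.2 hab) hmid
  have hR : uIcc b ((a + b) / 2) ⊆ Icc a b := uIcc_subset_Icc (right_mem_Icc.2 hab) hmid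
  have hφc : ContinuousOn φ (Icc a b) := fun x hx => (hφ' x hx).continuousWithinAt
  rw [integral_symm b ((a + b) / 2),
    integral_simpsonKernel_mul a _ (restrict hφ' hL) (restrict hφ'' hL) (restrict hφ''' hL)
      (hcont.mono hL),
    integral_simpsonKernel_mul b _ (restrict hφ' hR) (restrict hφ'' hR) (restrict hφ''' hR)
      (hcont.mono hR),
    ← integral_add_adjacent_intervals (hφc.mono hL).intervalIntegrable
      (hφc.mono (uIcc_comm b _ ▸ hR)).intervalIntegrable, integral_symm b ((a + b) / 2)]
  ring

theorem abs_simpson_error_le {m₃ M₃ : ℝ}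
    (hφ' : ∀ x ∈ Icc a b, HasDerivWithinAt φ (φ' x) (Icc a b) x)
    (hφ'' : ∀ x ∈ Icc a b, HasDerivWithinAt φ' (φ'' x) (Icc a b) x)
    (hφ''' : ∀ x ∈ Icc a b, HasDerivWithinAt φ'' (φ''' x) (Icc a b) x)
    (hcont : ContinuousOn φ''' (Icc a b)) (hab : a ≤ b)
    (hm : ∀ x ∈ Icc a b, m₃ ≤ φ''' x) (hM : ∀ x ∈ Icc a b, φ''' x ≤ M₃) :
    |(b - a) / 6 * (φ a + φ b) + 2 * (b - a) / 3 * φ ((a + b) / 2) - ∫ t in a..b, φ t| ≤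
      (M₃ - m₃) * (b - a) ^ 4 / 1152 := by
  have hL : Icc a ((a + b) / 2) ⊆ Icc a b := Icc_subset_Icc_right (by linarith)
  have hR : Icc ((a + b) / 2) b ⊆ Icc a b := Icc_subset_Icc_left (by linarith)
  have hφ'''_mem : ∀ x ∈ Icc a b, φ''' x ∈ Icc m₃ M₃ := fun x hx => ⟨hm x hx, hM x hx⟩
  have hleft := integral_mul_mem_Icc_of_nonneg (K := fun t => -simpsonKernel a ((a + b) / 2) t)
    (by linarith) (fun t ht => neg_nonneg.2 (simpsonKernel_nonpos _ _ ht))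
    (fun t ht => hφ'''_mem t (hL ht)) (continuous_simpsonKernel _ _).neg.continuousOn
    (hcont.mono hL)
  have hright := integral_mul_mem_Icc_of_nonneg (by linarith)
    (fun t ht => simpsonKernel_nonneg _ _ ht) (fun t ht => hφ'''_mem t (hR ht))
    (continuous_simpsonKernel b ((a + b) / 2)).continuousOn (hcont.mono hR)
  rw [integral_symm, integral_simpsonKernel] at hright
  simp only [neg_mul, intervalIntegral.integral_neg, integral_simpsonKernel] at hleft
  rw [simpson_error_eq_integral_simpsonKernel hφ' hφ'' hφ''' hcont hab, abs_le]
  constructor <;> linarith [hleft.1, hleft.2, hright.1, hright.2]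

end SimpsonError

theorem simpson_stmt8 (a b m₃ M₃ : ℝ) (hab : a < b) (φ φ' φ'' φ''' : ℝ → ℝ)
    (hφ' : ∀ x ∈ Set.Icc a b, HasDerivWithinAt φ (φ' x) (Set.Icc a b) x)
    (hφ'' : ∀ x ∈ Set.Icc a b, HasDerivWithinAt φ' (φ'' x) (Set.Icc a b) x)
    (hφ''' : ∀ x ∈ Set.Icc a b, HasDerivWithinAt φ'' (φ''' x) (Set.Icc a b) x)
    (hcont : ContinuousOn φ''' (Set.Icc a b))
    (hm : ∀ x ∈ Set.Icc a b, m₃ ≤ φ''' x) (hM : ∀ x ∈ Set.Icc a b, φ''' x ≤ M₃) :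
    |(φ a + φ b) / 6 + 2 / 3 * φ ((a + b) / 2) - (1 / (b - a)) * ∫ t in a..b, φ t| ≤
      1 / 1152 * (M₃ - m₃) * (b - a) ^ 3 := by
  have hba : 0 < b - a := sub_pos.2 hab
  have hscale : (φ a + φ b) / 6 + 2 / 3 * φ ((a + b) / 2) - (1 / (b - a)) * ∫ t in a..b, φ t =
      ((b - a) / 6 * (φ a + φ b) + 2 * (b - a) / 3 * φ ((a + b) / 2) - ∫ t in a..b, φ t) /
        (b - a) := by
    field_simp
  rw [hscale, abs_div, abs_of_pos hba, div_le_iff₀ hba]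
  calc _ ≤ (M₃ - m₃) * (b - a) ^ 4 / 1152 :=
        abs_simpson_error_le hφ' hφ'' hφ''' hcont hab.le hm hM
    _ = 1 / 1152 * (M₃ - m₃) * (b - a) ^ 3 * (b - a) := by ring
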